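/- Let $c\in(0,1/2]$, $\mu\in[-1+c,1-c]^n$, $d\in\mathbb{N}$, $\beta>0$, and let $f:\{-1,1\}^n\to\{-1,1\}$ be computed by a decision tree of size $s$. Then $\sum_{S:\,|\hat f(S,\mu)|\ge\beta\ \wedge\ |S|\le d}\hat f(S,\mu)^2\ \ge\ 1-\bigl(4(1-c/2)^d s+2^{d+2}\beta\bigr)$. -/

import Mathlib

open scoped Classical

/-- The real value `±1` encoded by a Boolean. -/
noncomputable def pm (b : Bool) : ℝ := if b then 1 else -1

/-- The probability that `x` is drawn from the product distribution `D_μ` on `{-1,1}^n`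
(encoded as `Fin n → Bool`), where `E[x i] = μ i`. -/
noncomputable def wt {n : ℕ} (μ : Fin n → ℝ) (x : Fin n → Bool) : ℝ :=
  ∏ i, (1 + pm (x i) * μ i) / 2

/-- Expectation of `F` under the product distribution `D_μ` on `{-1,1}^n`. -/
noncomputable def expD {n : ℕ} (μ : Fin n → ℝ) (F : (Fin n → Bool) → ℝ) : ℝ :=
  ∑ x : Fin n → Bool, wt μ x * F x

/-- `z_S(x,μ) = ∏_{i∈S} (x i - μ i)/√(1-(μ i)²)`. -/
noncomputable def zS {n : ℕ} (μ : Fin n → ℝ) (S : Finset (Fin n)) (x : Fin n → Bool) : ℝ :=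
  ∏ i ∈ S, (pm (x i) - μ i) / Real.sqrt (1 - (μ i) ^ 2)

/-- The normalized Fourier coefficient `f̂(S,μ) = E_{x∼D_μ}[f(x) z_S(x,μ)]`. -/
noncomputable def fourierC {n : ℕ} (μ : Fin n → ℝ) (F : (Fin n → Bool) → ℝ)
    (S : Finset (Fin n)) : ℝ :=
  expD μ (fun x => F x * zS μ S x)

/-- The partially normalized Fourier coefficient
`f̄(S,μ) = f̂(S,μ) / ∏_{i∈S} √(1-(μ i)²)`. -/
noncomputable def fbar {n : ℕ} (μ : Fin n → ℝ) (F : (Fin n → Bool) → ℝ)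
    (S : Finset (Fin n)) : ℝ :=
  fourierC μ F S / ∏ i ∈ S, Real.sqrt (1 - (μ i) ^ 2)

/-- A binary decision tree over `{-1,1}^n` (inputs encoded as `Fin n → Bool`),
with real-valued leaves.  In `node i tfalse ttrue`, the subtree `ttrue` is followed
when `x i` is `true` (i.e. `x i = 1`) and `tfalse` when `x i` is `false` (i.e. `x i = -1`). -/
inductive DTree (n : ℕ) : Type where
  | leaf : ℝ → DTree n
  | node : Fin n → DTree n → DTree n → DTree n

namespace DTree

/-- The function computed by a decision tree. -/
noncomputable def eval {n : ℕ} : DTree n → (Fin n → Bool) → ℝ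
  | leaf v, _ => v
  | node i tfalse ttrue, x => if x i then ttrue.eval x else tfalse.eval x

/-- The size of a decision tree: its number of leaves. -/
def size {n : ℕ} : DTree n → ℕ
  | leaf _ => 1
  | node _ l r => l.size + r.size

/-- The depth of a decision tree: the root has depth 0. -/
def depth {n : ℕ} : DTree n → ℕ
  | leaf _ => 0
  | node _ l r => max l.depth r.depth + 1

/-- `t.ValidFrom used`: no index of `used` is queried in `t`, and no index is
queried twice on any root-to-leaf path of `t`. -/
def ValidFrom {n : ℕ} : DTree n → Finset (Fin n) → Prop
  | leaf _, _ => True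
  | node i l r, used =>
      i ∉ used ∧ l.ValidFrom (insert i used) ∧ r.ValidFrom (insert i used)

/-- A valid decision tree: no index appears twice on any root-to-leaf path. -/
def Valid {n : ℕ} (t : DTree n) : Prop := t.ValidFrom ∅

/-- All leaf values of the tree lie in the set `A`. -/
def LeavesIn {n : ℕ} (A : Set ℝ) : DTree n → Prop
  | leaf v => v ∈ A
  | node _ l r => l.LeavesIn A ∧ r.LeavesIn A

/-- Truncate a decision tree at depth `d`: every internal node at depth `d`
is replaced by a leaf of value `0`. -/
noncomputable def trunc {n : ℕ} : ℕ → DTree n → DTree n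
  | _, leaf v => leaf v
  | 0, node _ _ _ => leaf 0
  | d + 1, node i l r => node i (trunc d l) (trunc d r)

end DTree
section Basic
variable {n : ℕ}

lemma pm_sq (b : Bool) : pm b ^ 2 = 1 := by cases b <;> norm_num [pm]

lemma wt_pos {μ : Fin n → ℝ} (h : ∀ i, |μ i| < 1) (x : Fin n → Bool) : 0 < wt μ x := by
  refine Finset.prod_pos fun i _ => ?_
  have h1 := (abs_lt.1 (h i)).1
  have h2 := (abs_lt.1 (h i)).2
  cases hx : x i <;> simp [pm] <;> nlinarith

lemma expD_add (μ : Fin n → ℝ) (F G : (Fin n → Bool) → ℝ) :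
    expD μ (fun x => F x + G x) = expD μ F + expD μ G := by
  simp [expD, mul_add, Finset.sum_add_distrib]

lemma expD_const_mul (μ : Fin n → ℝ) (a : ℝ) (F : (Fin n → Bool) → ℝ) :
    expD μ (fun x => a * F x) = a * expD μ F := by
  simp only [expD]; rw [Finset.mul_sum]
  exact Finset.sum_congr rfl fun x _ => by ring

lemma expD_nonneg {μ : Fin n → ℝ} (h : ∀ i, |μ i| < 1) {F : (Fin n → Bool) → ℝ}
    (hF : ∀ x, 0 ≤ F x) : 0 ≤ expD μ F :=
  Finset.sum_nonneg fun x _ => mul_nonneg (wt_pos h x).le (hF x)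

lemma expD_prod (μ : Fin n → ℝ) (h : Fin n → Bool → ℝ) :
    expD μ (fun x => ∏ i, h i (x i)) =
      ∏ i, ((1 + μ i) / 2 * h i true + (1 - μ i) / 2 * h i false) := by
  have e : ∀ x : Fin n → Bool, wt μ x * ∏ i, h i (x i)
      = ∏ i, ((1 + pm (x i) * μ i) / 2 * h i (x i)) := by
    intro x; rw [wt, ← Finset.prod_mul_distrib]
  simp only [expD, e]
  rw [show (∑ x : Fin n → Bool, ∏ i, ((1 + pm (x i) * μ i) / 2 * h i (x i)))
      = ∏ i, ∑ b : Bool, ((1 + pm b * μ i) / 2 * h i b) from (Fintype.prod_sum (fun (i : Fin n) (b : Bool) => (1 + pm b * μ i) / 2 * h i b)).symm]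
  refine Finset.prod_congr rfl fun i _ => ?_
  rw [Fintype.sum_bool]
  have : pm true = 1 := rfl
  have h2 : pm false = -1 := rfl
  rw [this, h2]; ring

lemma expD_one (μ : Fin n → ℝ) : expD μ (fun _ => (1:ℝ)) = 1 := by
  have h := expD_prod μ (fun _ _ => (1:ℝ))
  have e : (fun x : Fin n → Bool => ∏ _i : Fin n, (1:ℝ)) = fun _ => 1 := by
    funext x; simp
  rw [e] at h
  rw [h]
  refine Finset.prod_eq_one fun i _ => by ring

end Basic
section Split
variable {n : ℕ}

lemma expD_split (μ : Fin n → ℝ) (i : Fin n) (φ : Bool → ℝ) (A : (Fin n → Bool) → ℝ)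
    (hA : ∀ x b, A (Function.update x i b) = A x) :
    expD μ (fun x => φ (x i) * A x)
      = ((1 + μ i) / 2 * φ true + (1 - μ i) / 2 * φ false) * expD μ A := by
  classical
  set V : (Fin n → Bool) → ℝ :=
    fun x => ∏ j ∈ Finset.univ.erase i, (1 + pm (x j) * μ j) / 2 with hV
  have hwt : ∀ x, wt μ x = (1 + pm (x i) * μ i) / 2 * V x := by
    intro x
    rw [hV, wt]
    exact (Finset.mul_prod_erase _ _ (Finset.mem_univ i)).symm
  have hVup : ∀ x b, V (Function.update x i b) = V x := by
    intro x b
    refine Finset.prod_congr rfl fun j hj => ?_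
    rw [Function.update_of_ne (Finset.ne_of_mem_erase hj)]
  have key : ∀ ψ : Bool → ℝ, (∑ x : Fin n → Bool, wt μ x * (ψ (x i) * A x))
      = (1 + μ i) / 2 * ψ true * (∑ x ∈ Finset.univ.filter (fun x : Fin n → Bool => x i = true), V x * A x)
        + (1 - μ i) / 2 * ψ false * (∑ x ∈ Finset.univ.filter (fun x : Fin n → Bool => x i = false), V x * A x) := by
    intro ψ
    rw [← Finset.sum_filter_add_sum_filter_not Finset.univ (fun x : Fin n → Bool => x i = true)]
    congr 1
    · rw [Finset.mul_sum]
      refine Finset.sum_congr rfl fun x hx => ?_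
      have hxi : x i = true := (Finset.mem_filter.1 hx).2
      rw [hwt, hxi]
      have : pm true = 1 := rfl
      rw [this]; ring
    · rw [Finset.mul_sum]
      refine Finset.sum_congr (by ext x; simp [Bool.not_eq_true]) fun x hx => ?_
      have hxi : x i = false := by
        have := (Finset.mem_filter.1 hx).2
        simpa [Bool.not_eq_true] using this
      rw [hwt, hxi]
      have : pm false = -1 := rfl
      rw [this]; ring
  have hbij : (∑ x ∈ Finset.univ.filter (fun x : Fin n → Bool => x i = false), V x * A x)
      = (∑ x ∈ Finset.univ.filter (fun x : Fin n → Bool => x i = true), V x * A x) := by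
    refine Finset.sum_bij' (fun x _ => Function.update x i true)
      (fun x _ => Function.update x i false) ?_ ?_ ?_ ?_ ?_
    · intro a ha; simp
    · intro a ha; simp
    · intro a ha
      have h0 : a i = false := by simpa using (Finset.mem_filter.1 ha).2
      show Function.update (Function.update a i true) i false = a
      rw [Function.update_idem, ← h0, Function.update_eq_self]
    · intro a ha
      have h0 : a i = true := by simpa using (Finset.mem_filter.1 ha).2
      show Function.update (Function.update a i false) i true = a
      rw [Function.update_idem, ← h0, Function.update_eq_self]
    · intro a ha
      show V a * A a = V (Function.update a i true) * A (Function.update a i true)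
      rw [hVup, hA]
  have hφ := key φ
  have h1 := key (fun _ => (1:ℝ))
  rw [hbij] at hφ h1
  have hEA : expD μ A
      = (∑ x ∈ Finset.univ.filter (fun x : Fin n → Bool => x i = true), V x * A x) := by
    have e : expD μ A = ∑ x : Fin n → Bool, wt μ x * ((fun _ => (1:ℝ)) (x i) * A x) := by
      simp [expD]
    rw [e, h1]; ring
  show (∑ x : Fin n → Bool, wt μ x * (φ (x i) * A x)) = _
  rw [hφ, hEA]; ring

end Split
section TreeBasics
variable {n : ℕ}

lemma eval_indep (t : DTree n) : ∀ (used : Finset (Fin n)), t.ValidFrom used →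
    ∀ i ∈ used, ∀ (x : Fin n → Bool) (b : Bool),
      t.eval (Function.update x i b) = t.eval x := by
  induction t with
  | leaf v => intro used _ i hi x b; rfl
  | node j l r ihl ihr =>
    intro used hv i hi x b
    obtain ⟨hj, hl, hr⟩ := hv
    have hne : j ≠ i := fun h => hj (h ▸ hi)
    have he : ∀ y : Fin n → Bool, DTree.eval (DTree.node j l r) y
        = if y j then r.eval y else l.eval y := fun y => rfl
    rw [he, he, Function.update_of_ne hne]
    cases hxj : x j
    · rw [if_neg (by simp), if_neg (by simp)]
      exact ihl _ hl i (Finset.mem_insert_of_mem hi) x b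
    · rw [if_pos rfl, if_pos rfl]
      exact ihr _ hr i (Finset.mem_insert_of_mem hi) x b

lemma validFrom_trunc (t : DTree n) : ∀ (d : ℕ) (used : Finset (Fin n)),
    t.ValidFrom used → (t.trunc d).ValidFrom used := by
  induction t with
  | leaf v => intro d used h; cases d <;> exact trivial
  | node j l r ihl ihr =>
    intro d used h
    obtain ⟨hj, hl, hr⟩ := h
    cases d with
    | zero => exact trivial
    | succ d => exact ⟨hj, ihl d _ hl, ihr d _ hr⟩

lemma depth_trunc (t : DTree n) : ∀ d : ℕ, (t.trunc d).depth ≤ d := by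
  induction t with
  | leaf v => intro d; cases d <;> exact Nat.zero_le _
  | node j l r ihl ihr =>
    intro d
    cases d with
    | zero => exact Nat.le_refl 0
    | succ d =>
      show max (DTree.trunc d l).depth (DTree.trunc d r).depth + 1 ≤ d + 1
      exact Nat.succ_le_succ (max_le (ihl d) (ihr d))

lemma leavesIn_trunc (t : DTree n) (hle : t.LeavesIn {-1, 1}) :
    ∀ d : ℕ, (t.trunc d).LeavesIn {v : ℝ | |v| ≤ 1} := by
  induction t with
  | leaf v =>
    intro d
    have : |v| ≤ 1 := by rcases hle with h | h <;> rw [h] <;> norm_num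
    cases d <;> exact this
  | node j l r ihl ihr =>
    intro d
    obtain ⟨hl, hr⟩ := hle
    cases d with
    | zero => show |(0:ℝ)| ≤ 1; norm_num
    | succ d => exact ⟨ihl hl d, ihr hr d⟩

lemma eval_abs_le (t : DTree n) (h : t.LeavesIn {v : ℝ | |v| ≤ 1}) (x : Fin n → Bool) :
    |t.eval x| ≤ 1 := by
  induction t with
  | leaf v => exact h
  | node j l r ihl ihr =>
    obtain ⟨hl, hr⟩ := h
    show |if x j then r.eval x else l.eval x| ≤ 1
    cases hxj : x j <;> simp only [if_true, if_false, Bool.false_eq_true, Bool.true_eq_false]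
    · exact ihl hl
    · exact ihr hr

lemma eval_sq (t : DTree n) (h : t.LeavesIn {-1, 1}) (x : Fin n → Bool) :
    (t.eval x) ^ 2 = 1 := by
  induction t with
  | leaf v => rcases h with h | h <;> rw [show DTree.eval (DTree.leaf v) x = v from rfl, h] <;> norm_num
  | node j l r ihl ihr =>
    obtain ⟨hl, hr⟩ := h
    show (if x j then r.eval x else l.eval x) ^ 2 = 1
    cases hxj : x j <;> simp only [if_true, if_false, Bool.false_eq_true, Bool.true_eq_false]
    · exact ihl hl
    · exact ihr hr

lemma size_pos (t : DTree n) : 1 ≤ t.size := by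
  induction t with
  | leaf v => exact Nat.le_refl 1
  | node j l r ihl ihr => show 1 ≤ l.size + r.size; omega

end TreeBasics
section Fourier
variable {n : ℕ}

lemma zS_indep (μ : Fin n → ℝ) {S : Finset (Fin n)} {i : Fin n} (hi : i ∉ S)
    (x : Fin n → Bool) (b : Bool) : zS μ S (Function.update x i b) = zS μ S x := by
  refine Finset.prod_congr rfl fun j hj => ?_
  have hne : j ≠ i := fun h => hi (h ▸ hj)
  rw [Function.update_of_ne hne]

lemma zS_erase (μ : Fin n → ℝ) {S : Finset (Fin n)} {i : Fin n} (hi : i ∈ S)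
    (x : Fin n → Bool) :
    zS μ S x = (pm (x i) - μ i) / Real.sqrt (1 - μ i ^ 2) * zS μ (S.erase i) x :=
  (Finset.mul_prod_erase S _ hi).symm

lemma expD_zS (μ : Fin n → ℝ) (S : Finset (Fin n)) :
    expD μ (fun x => zS μ S x) = if S = ∅ then 1 else 0 := by
  have e : (fun x : Fin n → Bool => zS μ S x)
      = fun x => ∏ i, (fun i (b : Bool) =>
          if i ∈ S then (pm b - μ i) / Real.sqrt (1 - μ i ^ 2) else 1) i (x i) := by
    funext x
    rw [zS, ← Finset.prod_filter]
    exact Finset.prod_congr (by simp) fun j _ => rfl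
  rw [e, expD_prod μ (fun i (b : Bool) =>
      if i ∈ S then (pm b - μ i) / Real.sqrt (1 - μ i ^ 2) else 1)]
  by_cases hS : S = ∅
  · rw [if_pos hS]
    refine Finset.prod_eq_one fun i _ => ?_
    rw [if_neg (by simp [hS]), if_neg (by simp [hS])]; ring
  · rw [if_neg hS]
    obtain ⟨i, hi⟩ := Finset.nonempty_iff_ne_empty.2 hS
    refine Finset.prod_eq_zero (Finset.mem_univ i) ?_
    rw [if_pos hi, if_pos hi]
    have h1 : pm true = 1 := rfl
    have h2 : pm false = -1 := rfl
    rw [h1, h2]; ring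

lemma fourierC_const (μ : Fin n → ℝ) (v : ℝ) (S : Finset (Fin n)) :
    fourierC μ (fun _ => v) S = if S = ∅ then v else 0 := by
  rw [fourierC,
    show (fun x : Fin n → Bool => v * zS μ S x)
      = fun x => v * (fun y => zS μ S y) x from rfl,
    expD_const_mul, expD_zS]
  by_cases hS : S = ∅ <;> simp [hS]

lemma sqrt_one_sub_sq_pos {m : ℝ} (h : |m| < 1) : 0 < Real.sqrt (1 - m ^ 2) := by
  have h1 := (abs_lt.1 h).1
  have h2 := (abs_lt.1 h).2
  apply Real.sqrt_pos.2; nlinarith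

lemma fourier_node (μ : Fin n → ℝ) (h1 : ∀ j, |μ j| < 1) (i : Fin n)
    (R L : (Fin n → Bool) → ℝ)
    (hR : ∀ x b, R (Function.update x i b) = R x)
    (hL : ∀ x b, L (Function.update x i b) = L x)
    (S : Finset (Fin n)) :
    fourierC μ (fun x => if x i then R x else L x) S =
      if i ∈ S then
        Real.sqrt (1 - μ i ^ 2) / 2 *
          (fourierC μ R (S.erase i) - fourierC μ L (S.erase i))
      else (1 + μ i) / 2 * fourierC μ R S + (1 - μ i) / 2 * fourierC μ L S := by
  have hsq : Real.sqrt (1 - μ i ^ 2) ^ 2 = 1 - μ i ^ 2 :=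
    Real.sq_sqrt (by have h2 := (abs_lt.1 (h1 i)).1; have h3 := (abs_lt.1 (h1 i)).2; nlinarith)
  have hspos := sqrt_one_sub_sq_pos (h1 i)
  set s := Real.sqrt (1 - μ i ^ 2) with hs
  by_cases hiS : i ∈ S
  · rw [if_pos hiS]
    have hiS' : i ∉ S.erase i := Finset.notMem_erase i S
    have hzind := fun x b => zS_indep μ hiS' x b
    have hAR : ∀ (x : Fin n → Bool) (b : Bool),
        (fun y => R y * zS μ (S.erase i) y) (Function.update x i b)
          = (fun y => R y * zS μ (S.erase i) y) x := fun x b => by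
      show R (Function.update x i b) * zS μ (S.erase i) (Function.update x i b) = _
      rw [hR, hzind]
    have hAL : ∀ (x : Fin n → Bool) (b : Bool),
        (fun y => L y * zS μ (S.erase i) y) (Function.update x i b)
          = (fun y => L y * zS μ (S.erase i) y) x := fun x b => by
      show L (Function.update x i b) * zS μ (S.erase i) (Function.update x i b) = _
      rw [hL, hzind]
    have key : (fun x : Fin n → Bool => (if x i then R x else L x) * zS μ S x)
        = fun x => (fun b : Bool => if b then (1 - μ i) / s else 0) (x i)
              * ((fun y => R y * zS μ (S.erase i) y) x)
            + (fun b : Bool => if b then 0 else (-1 - μ i) / s) (x i)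
              * ((fun y => L y * zS μ (S.erase i) y) x) := by
      funext x
      rw [zS_erase μ hiS, ← hs]
      cases hxi : x i <;> simp [pm] <;> ring
    rw [fourierC, key, expD_add,
      expD_split μ i (fun b : Bool => if b then (1 - μ i) / s else 0)
        (fun y => R y * zS μ (S.erase i) y) hAR,
      expD_split μ i (fun b : Bool => if b then 0 else (-1 - μ i) / s)
        (fun y => L y * zS μ (S.erase i) y) hAL]
    have c1 : (1 + μ i) / 2 * (if (true : Bool) then (1 - μ i) / s else 0)
        + (1 - μ i) / 2 * (if (false : Bool) then (1 - μ i) / s else 0) = s / 2 := by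
      rw [if_pos rfl, if_neg (by simp)]
      rw [mul_zero, add_zero, div_mul_div_comm, div_eq_div_iff (by positivity) two_ne_zero]
      linear_combination (-2 : ℝ) * hsq
    have c2 : (1 + μ i) / 2 * (if (true : Bool) then 0 else (-1 - μ i) / s)
        + (1 - μ i) / 2 * (if (false : Bool) then 0 else (-1 - μ i) / s) = -(s / 2) := by
      rw [if_pos rfl, if_neg (by simp)]
      rw [mul_zero, zero_add, div_mul_div_comm,
        div_eq_iff (by positivity : (0:ℝ) < 2 * s).ne']
      linear_combination hsq
    rw [c1, c2,
      show expD μ (fun y => R y * zS μ (S.erase i) y) = fourierC μ R (S.erase i) from rfl,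
      show expD μ (fun y => L y * zS μ (S.erase i) y) = fourierC μ L (S.erase i) from rfl]
    ring
  · rw [if_neg hiS]
    have hzind := fun x b => zS_indep μ hiS x b
    have hAR : ∀ (x : Fin n → Bool) (b : Bool),
        (fun y => R y * zS μ S y) (Function.update x i b)
          = (fun y => R y * zS μ S y) x := fun x b => by
      show R (Function.update x i b) * zS μ S (Function.update x i b) = _
      rw [hR, hzind]
    have hAL : ∀ (x : Fin n → Bool) (b : Bool),
        (fun y => L y * zS μ S y) (Function.update x i b)
          = (fun y => L y * zS μ S y) x := fun x b => by
      show L (Function.update x i b) * zS μ S (Function.update x i b) = _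
      rw [hL, hzind]
    have key : (fun x : Fin n → Bool => (if x i then R x else L x) * zS μ S x)
        = fun x => (fun b : Bool => if b then (1:ℝ) else 0) (x i)
              * ((fun y => R y * zS μ S y) x)
            + (fun b : Bool => if b then (0:ℝ) else 1) (x i)
              * ((fun y => L y * zS μ S y) x) := by
      funext x
      cases hxi : x i <;> simp [pm]
    rw [fourierC, key, expD_add,
      expD_split μ i (fun b : Bool => if b then (1:ℝ) else 0)
        (fun y => R y * zS μ S y) hAR,
      expD_split μ i (fun b : Bool => if b then (0:ℝ) else 1)
        (fun y => L y * zS μ S y) hAL,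
      show expD μ (fun y => R y * zS μ S y) = fourierC μ R S from rfl,
      show expD μ (fun y => L y * zS μ S y) = fourierC μ L S from rfl]
    norm_num

end Fourier
section L1
variable {n : ℕ}

lemma fourierC_ext (μ : Fin n → ℝ) {F G : (Fin n → Bool) → ℝ} (h : ∀ x, F x = G x)
    (S : Finset (Fin n)) : fourierC μ F S = fourierC μ G S := by
  have : F = G := funext h
  rw [this]

lemma eval_leaf (v : ℝ) : (DTree.leaf (n := n) v).eval = fun _ => v := by
  funext x; rfl

lemma eval_node (i : Fin n) (l r : DTree n) :
    (DTree.node i l r).eval = fun x => if x i then r.eval x else l.eval x := by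
  funext x; rfl

lemma fourier_vanish (μ : Fin n → ℝ) (h1 : ∀ j, |μ j| < 1) (t : DTree n) :
    ∀ (used : Finset (Fin n)), t.ValidFrom used →
      ∀ S : Finset (Fin n), t.depth < S.card → fourierC μ t.eval S = 0 := by
  induction t with
  | leaf v =>
    intro used _ S hS
    rw [eval_leaf, fourierC_const]
    rw [if_neg]
    intro h
    rw [h] at hS
    simp [DTree.depth] at hS
  | node i l r ihl ihr =>
    intro used hv S hS
    obtain ⟨hi, hvl, hvr⟩ := hv
    have hRind : ∀ x b, r.eval (Function.update x i b) = r.eval x :=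
      fun x b => eval_indep r _ hvr i (Finset.mem_insert_self i used) x b
    have hLind : ∀ x b, l.eval (Function.update x i b) = l.eval x :=
      fun x b => eval_indep l _ hvl i (Finset.mem_insert_self i used) x b
    rw [eval_node, fourier_node μ h1 i r.eval l.eval hRind hLind S]
    have hdep : (DTree.node i l r).depth = max l.depth r.depth + 1 := rfl
    rw [hdep] at hS
    by_cases hiS : i ∈ S
    · rw [if_pos hiS]
      have hcard : max l.depth r.depth < (S.erase i).card := by
        rw [Finset.card_erase_of_mem hiS]; omega
      rw [ihr _ hvr _ (lt_of_le_of_lt (le_max_right _ _) hcard),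
        ihl _ hvl _ (lt_of_le_of_lt (le_max_left _ _) hcard)]
      ring
    · rw [if_neg hiS]
      rw [ihr _ hvr _ (by omega : r.depth < S.card),
        ihl _ hvl _ (by omega : l.depth < S.card)]
      ring

lemma fourier_L1 (μ : Fin n → ℝ) (h1 : ∀ j, |μ j| < 1) (t : DTree n) :
    ∀ (used : Finset (Fin n)), t.ValidFrom used → t.LeavesIn {v : ℝ | |v| ≤ 1} →
      (∑ S : Finset (Fin n), |fourierC μ t.eval S|) ≤ 2 ^ t.depth := by
  induction t with
  | leaf v =>
    intro used _ hle
    have he : ∀ S : Finset (Fin n), |fourierC μ (DTree.leaf (n := n) v).eval S|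
        = if S = ∅ then |v| else 0 := by
      intro S
      rw [eval_leaf, fourierC_const]
      by_cases hS : S = ∅ <;> simp [hS]
    rw [Finset.sum_congr rfl fun S _ => he S]
    rw [Finset.sum_ite_eq' Finset.univ (∅ : Finset (Fin n)) (fun _ => |v|)]
    simpa [DTree.depth, DTree.LeavesIn] using hle
  | node i l r ihl ihr =>
    intro used hv hle
    obtain ⟨hi, hvl, hvr⟩ := hv
    obtain ⟨hll, hlr⟩ := hle
    have hRind : ∀ x b, r.eval (Function.update x i b) = r.eval x :=
      fun x b => eval_indep r _ hvr i (Finset.mem_insert_self i used) x b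
    have hLind : ∀ x b, l.eval (Function.update x i b) = l.eval x :=
      fun x b => eval_indep l _ hvl i (Finset.mem_insert_self i used) x b
    have hf : ∀ S : Finset (Fin n), fourierC μ (DTree.node i l r).eval S
        = if i ∈ S then
            Real.sqrt (1 - μ i ^ 2) / 2 *
              (fourierC μ r.eval (S.erase i) - fourierC μ l.eval (S.erase i))
          else (1 + μ i) / 2 * fourierC μ r.eval S + (1 - μ i) / 2 * fourierC μ l.eval S :=
      fun S => by
        rw [eval_node]; exact fourier_node μ h1 i r.eval l.eval hRind hLind S
    -- split the sum over all subsets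
    have hsplit : (∑ S : Finset (Fin n), |fourierC μ (DTree.node i l r).eval S|)
        = (∑ S ∈ ((Finset.univ : Finset (Fin n)).erase i).powerset,
            |fourierC μ (DTree.node i l r).eval S|)
          + ∑ S ∈ ((Finset.univ : Finset (Fin n)).erase i).powerset,
            |fourierC μ (DTree.node i l r).eval (insert i S)| := by
      rw [← Finset.sum_powerset_insert (Finset.notMem_erase i Finset.univ)]
      rw [Finset.insert_erase (Finset.mem_univ i), Finset.powerset_univ]
    set SR := ∑ S : Finset (Fin n), |fourierC μ r.eval S| with hSR
    set SL := ∑ S : Finset (Fin n), |fourierC μ l.eval S| with hSL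
    have hsub : ∀ (F : (Fin n → Bool) → ℝ),
        (∑ S ∈ ((Finset.univ : Finset (Fin n)).erase i).powerset, |fourierC μ F S|)
          ≤ ∑ S : Finset (Fin n), |fourierC μ F S| :=
      fun F => Finset.sum_le_univ_sum_of_nonneg fun S => abs_nonneg _
    have hs1 : Real.sqrt (1 - μ i ^ 2) ≤ 1 := by
      exact Real.sqrt_le_one.2 (by nlinarith [sq_nonneg (μ i)])
    have hs0 : 0 ≤ Real.sqrt (1 - μ i ^ 2) := Real.sqrt_nonneg _
    have hA : (∑ S ∈ ((Finset.univ : Finset (Fin n)).erase i).powerset,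
          |fourierC μ (DTree.node i l r).eval S|)
        ≤ (1 + μ i) / 2 * SR + (1 - μ i) / 2 * SL := by
      have step : ∀ S ∈ ((Finset.univ : Finset (Fin n)).erase i).powerset,
          |fourierC μ (DTree.node i l r).eval S|
            ≤ (1 + μ i) / 2 * |fourierC μ r.eval S| + (1 - μ i) / 2 * |fourierC μ l.eval S| := by
        intro S hS
        have hiS : i ∉ S := fun h =>
          Finset.notMem_erase i Finset.univ ((Finset.mem_powerset.1 hS) h)
        rw [hf S, if_neg hiS]
        have ha1 : (0:ℝ) ≤ (1 + μ i) / 2 := by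
          have := (abs_lt.1 (h1 i)).1; linarith
        have ha2 : (0:ℝ) ≤ (1 - μ i) / 2 := by
          have := (abs_lt.1 (h1 i)).2; linarith
        calc |(1 + μ i) / 2 * fourierC μ r.eval S + (1 - μ i) / 2 * fourierC μ l.eval S|
            ≤ |(1 + μ i) / 2 * fourierC μ r.eval S| + |(1 - μ i) / 2 * fourierC μ l.eval S| :=
              abs_add_le _ _
          _ = (1 + μ i) / 2 * |fourierC μ r.eval S| + (1 - μ i) / 2 * |fourierC μ l.eval S| := by
              rw [abs_mul, abs_mul, abs_of_nonneg ha1, abs_of_nonneg ha2]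
      calc (∑ S ∈ ((Finset.univ : Finset (Fin n)).erase i).powerset,
            |fourierC μ (DTree.node i l r).eval S|)
          ≤ ∑ S ∈ ((Finset.univ : Finset (Fin n)).erase i).powerset,
              ((1 + μ i) / 2 * |fourierC μ r.eval S| + (1 - μ i) / 2 * |fourierC μ l.eval S|) :=
            Finset.sum_le_sum step
        _ = (1 + μ i) / 2 * (∑ S ∈ ((Finset.univ : Finset (Fin n)).erase i).powerset,
              |fourierC μ r.eval S|)
            + (1 - μ i) / 2 * (∑ S ∈ ((Finset.univ : Finset (Fin n)).erase i).powerset,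
              |fourierC μ l.eval S|) := by
            rw [Finset.sum_add_distrib, Finset.mul_sum, Finset.mul_sum]
        _ ≤ (1 + μ i) / 2 * SR + (1 - μ i) / 2 * SL := by
            have ha1 : (0:ℝ) ≤ (1 + μ i) / 2 := by
              have := (abs_lt.1 (h1 i)).1; linarith
            have ha2 : (0:ℝ) ≤ (1 - μ i) / 2 := by
              have := (abs_lt.1 (h1 i)).2; linarith
            exact add_le_add (mul_le_mul_of_nonneg_left (hsub r.eval) ha1)
              (mul_le_mul_of_nonneg_left (hsub l.eval) ha2)
    have hB : (∑ S ∈ ((Finset.univ : Finset (Fin n)).erase i).powerset,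
          |fourierC μ (DTree.node i l r).eval (insert i S)|)
        ≤ 1 / 2 * SR + 1 / 2 * SL := by
      have step : ∀ S ∈ ((Finset.univ : Finset (Fin n)).erase i).powerset,
          |fourierC μ (DTree.node i l r).eval (insert i S)|
            ≤ 1 / 2 * |fourierC μ r.eval S| + 1 / 2 * |fourierC μ l.eval S| := by
        intro S hS
        have hiS : i ∉ S := fun h =>
          Finset.notMem_erase i Finset.univ ((Finset.mem_powerset.1 hS) h)
        rw [hf (insert i S), if_pos (Finset.mem_insert_self i S),
          Finset.erase_insert hiS]
        rw [abs_mul, abs_div, abs_of_nonneg hs0]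
        have habs : |fourierC μ r.eval S - fourierC μ l.eval S|
            ≤ |fourierC μ r.eval S| + |fourierC μ l.eval S| := abs_sub _ _
        calc Real.sqrt (1 - μ i ^ 2) / |2| * |fourierC μ r.eval S - fourierC μ l.eval S|
            ≤ 1 / 2 * (|fourierC μ r.eval S| + |fourierC μ l.eval S|) := by
              rw [abs_two]
              apply mul_le_mul (by linarith) habs (abs_nonneg _) (by norm_num)
          _ = 1 / 2 * |fourierC μ r.eval S| + 1 / 2 * |fourierC μ l.eval S| := by ring
      calc (∑ S ∈ ((Finset.univ : Finset (Fin n)).erase i).powerset,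
            |fourierC μ (DTree.node i l r).eval (insert i S)|)
          ≤ ∑ S ∈ ((Finset.univ : Finset (Fin n)).erase i).powerset,
              (1 / 2 * |fourierC μ r.eval S| + 1 / 2 * |fourierC μ l.eval S|) :=
            Finset.sum_le_sum step
        _ = 1 / 2 * (∑ S ∈ ((Finset.univ : Finset (Fin n)).erase i).powerset,
              |fourierC μ r.eval S|)
            + 1 / 2 * (∑ S ∈ ((Finset.univ : Finset (Fin n)).erase i).powerset,
              |fourierC μ l.eval S|) := by
            rw [Finset.sum_add_distrib, Finset.mul_sum, Finset.mul_sum]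
        _ ≤ 1 / 2 * SR + 1 / 2 * SL := by
            exact add_le_add (mul_le_mul_of_nonneg_left (hsub r.eval) (by norm_num))
              (mul_le_mul_of_nonneg_left (hsub l.eval) (by norm_num))
    have hIR : SR ≤ 2 ^ r.depth := ihr _ hvr hlr
    have hIL : SL ≤ 2 ^ l.depth := ihl _ hvl hll
    have hSR0 : 0 ≤ SR := Finset.sum_nonneg fun S _ => abs_nonneg _
    have hSL0 : 0 ≤ SL := Finset.sum_nonneg fun S _ => abs_nonneg _
    have h2r : (2:ℝ) ^ r.depth ≤ 2 ^ max l.depth r.depth :=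
      pow_le_pow_right₀ (by norm_num) (le_max_right _ _)
    have h2l : (2:ℝ) ^ l.depth ≤ 2 ^ max l.depth r.depth :=
      pow_le_pow_right₀ (by norm_num) (le_max_left _ _)
    have hdep : (DTree.node i l r).depth = max l.depth r.depth + 1 := rfl
    rw [hsplit, hdep, pow_succ]
    have hm1 : |μ i| < 1 := h1 i
    have hb1 := (abs_lt.1 hm1).1
    have hb2 := (abs_lt.1 hm1).2
    have e1 : (1 + μ i) / 2 * SR ≤ (1 + μ i) / 2 * (2 ^ max l.depth r.depth) := by
      apply mul_le_mul_of_nonneg_left (hIR.trans h2r) (by linarith)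
    have e2 : (1 - μ i) / 2 * SL ≤ (1 - μ i) / 2 * (2 ^ max l.depth r.depth) := by
      apply mul_le_mul_of_nonneg_left (hIL.trans h2l) (by linarith)
    have e3 : 1 / 2 * SR ≤ 1 / 2 * (2 ^ max l.depth r.depth) := by
      apply mul_le_mul_of_nonneg_left (hIR.trans h2r) (by norm_num)
    have e4 : 1 / 2 * SL ≤ 1 / 2 * (2 ^ max l.depth r.depth) := by
      apply mul_le_mul_of_nonneg_left (hIL.trans h2l) (by norm_num)
    linarith [hA, hB]

end L1
section Plancherel
variable {n : ℕ}

lemma delta_coord {m : ℝ} (hm : |m| < 1) (a b : Bool) :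
    (pm a - m) / Real.sqrt (1 - m ^ 2) * ((pm b - m) / Real.sqrt (1 - m ^ 2)) + 1
      = if a = b then 2 / (1 + pm a * m) else 0 := by
  have h1 := (abs_lt.1 hm).1
  have h2 := (abs_lt.1 hm).2
  have hs : Real.sqrt (1 - m ^ 2) ^ 2 = 1 - m ^ 2 := Real.sq_sqrt (by nlinarith)
  have hsne : Real.sqrt (1 - m ^ 2) ≠ 0 := (sqrt_one_sub_sq_pos hm).ne'
  have key : ∀ u v : ℝ, (u - m) / Real.sqrt (1 - m ^ 2) * ((v - m) / Real.sqrt (1 - m ^ 2))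
      = (u - m) * (v - m) / (1 - m ^ 2) := by
    intro u v
    rw [div_mul_div_comm, ← pow_two, hs]
  have hne : (1 - m ^ 2) ≠ 0 := by nlinarith
  cases a <;> cases b <;>
      simp only [pm, reduceIte, if_true, if_false, Bool.false_eq_true, Bool.true_eq_false, key]
  · rw [div_add' _ _ _ hne, div_eq_div_iff hne (by intro h; nlinarith : 1 + (-1) * m ≠ 0)]
    ring
  · rw [div_add' _ _ _ hne, div_eq_zero_iff]; left; ring
  · rw [div_add' _ _ _ hne, div_eq_zero_iff]; left; ring
  · rw [div_add' _ _ _ hne, div_eq_div_iff hne (by intro h; nlinarith : 1 + 1 * m ≠ 0)]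
    ring

lemma delta_sum (μ : Fin n → ℝ) (h1 : ∀ j, |μ j| < 1) (x y : Fin n → Bool) :
    (∑ S : Finset (Fin n), zS μ S x * zS μ S y)
      = if x = y then (wt μ x)⁻¹ else 0 := by
  have e1 : (∑ S : Finset (Fin n), zS μ S x * zS μ S y)
      = ∏ i, ((pm (x i) - μ i) / Real.sqrt (1 - μ i ^ 2)
          * ((pm (y i) - μ i) / Real.sqrt (1 - μ i ^ 2)) + 1) := by
    rw [Fintype.prod_add]
    refine Finset.sum_congr rfl fun T _ => ?_
    rw [Finset.prod_const_one, mul_one, zS, zS, ← Finset.prod_mul_distrib]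
  rw [e1]
  rw [Finset.prod_congr rfl fun i _ => delta_coord (h1 i) (x i) (y i)]
  by_cases hxy : x = y
  · subst hxy
    rw [if_pos rfl, wt, ← Finset.prod_inv_distrib]
    refine Finset.prod_congr rfl fun i _ => ?_
    rw [if_pos rfl, inv_div]
  · obtain ⟨i, hi⟩ : ∃ i, x i ≠ y i := by
      by_contra h; push_neg at h; exact hxy (funext h)
    rw [if_neg hxy]
    exact Finset.prod_eq_zero (Finset.mem_univ i) (by rw [if_neg hi])

lemma plancherel (μ : Fin n → ℝ) (h1 : ∀ j, |μ j| < 1) (F G : (Fin n → Bool) → ℝ) :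
    (∑ S : Finset (Fin n), fourierC μ F S * fourierC μ G S)
      = expD μ (fun x => F x * G x) := by
  have e1 : (∑ S : Finset (Fin n), fourierC μ F S * fourierC μ G S)
      = ∑ S : Finset (Fin n), ∑ x : Fin n → Bool, ∑ y : Fin n → Bool,
          (wt μ x * (F x * zS μ S x)) * (wt μ y * (G y * zS μ S y)) := by
    refine Finset.sum_congr rfl fun S _ => ?_
    rw [fourierC, fourierC, expD, expD, Finset.sum_mul_sum]
  rw [e1, Finset.sum_comm]
  have e2 : ∀ x : Fin n → Bool,
      (∑ S : Finset (Fin n), ∑ y : Fin n → Bool,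
        (wt μ x * (F x * zS μ S x)) * (wt μ y * (G y * zS μ S y)))
      = ∑ y : Fin n → Bool, (wt μ x * wt μ y * F x * G y)
          * ∑ S : Finset (Fin n), zS μ S x * zS μ S y := by
    intro x
    rw [Finset.sum_comm]
    refine Finset.sum_congr rfl fun y _ => ?_
    rw [Finset.mul_sum]
    exact Finset.sum_congr rfl fun S _ => by ring
  rw [Finset.sum_congr rfl fun x _ => e2 x]
  rw [expD]
  refine Finset.sum_congr rfl fun x _ => ?_
  rw [Finset.sum_congr rfl fun y _ => by
    rw [delta_sum μ h1 x y, mul_ite, mul_zero]]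
  rw [Finset.sum_ite_eq Finset.univ x
    (fun y => wt μ x * wt μ y * F x * G y * (wt μ x)⁻¹)]
  rw [if_pos (Finset.mem_univ x)]
  have hw : wt μ x ≠ 0 := (wt_pos h1 x).ne'
  field_simp

lemma parseval (μ : Fin n → ℝ) (h1 : ∀ j, |μ j| < 1) (F : (Fin n → Bool) → ℝ) :
    (∑ S : Finset (Fin n), (fourierC μ F S) ^ 2) = expD μ (fun x => (F x) ^ 2) := by
  have := plancherel μ h1 F F
  calc (∑ S : Finset (Fin n), (fourierC μ F S) ^ 2)
      = ∑ S : Finset (Fin n), fourierC μ F S * fourierC μ F S := by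
        refine Finset.sum_congr rfl fun S _ => by ring
    _ = expD μ (fun x => F x * F x) := this
    _ = expD μ (fun x => (F x) ^ 2) := by
        refine Finset.sum_congr rfl fun x _ => by ring

lemma fourierC_sub (μ : Fin n → ℝ) (F G : (Fin n → Bool) → ℝ) (S : Finset (Fin n)) :
    fourierC μ (fun x => F x - G x) S = fourierC μ F S - fourierC μ G S := by
  simp only [fourierC, expD, sub_mul, mul_sub]
  rw [Finset.sum_sub_distrib]

end Plancherel
section TruncErr
variable {n : ℕ}

lemma expD_zero (μ : Fin n → ℝ) : expD μ (fun _ => (0:ℝ)) = 0 := by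
  simp [expD]

lemma trunc_err (μ : Fin n → ℝ) {c : ℝ} (hc : 0 < c) (hc2 : c ≤ 1/2)
    (hμ : ∀ i, μ i ∈ Set.Icc (-1+c) (1-c)) (h1 : ∀ j, |μ j| < 1) (t : DTree n) :
    ∀ (d : ℕ) (used : Finset (Fin n)), t.ValidFrom used → t.LeavesIn {-1,1} →
      expD μ (fun x => (t.eval x - (t.trunc d).eval x)^2)
        ≤ (t.size : ℝ) * (1 - c/2)^d := by
  have hρ0 : (0:ℝ) ≤ 1 - c/2 := by linarith
  induction t with
  | leaf v =>
    intro d used _ _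
    have e : (fun x : Fin n → Bool =>
        ((DTree.leaf (n := n) v).eval x - ((DTree.leaf (n := n) v).trunc d).eval x)^2)
        = fun _ => 0 := by
      funext x
      have : (DTree.leaf (n := n) v).trunc d = DTree.leaf v := by cases d <;> rfl
      rw [this]; ring
    rw [e, expD_zero]
    have : (0:ℝ) ≤ (1 - c/2)^d := pow_nonneg hρ0 d
    have hsz : ((DTree.leaf (n := n) v).size : ℝ) = 1 := by norm_num [DTree.size]
    nlinarith
  | node i l r ihl ihr =>
    intro d used hv hle
    obtain ⟨hi, hvl, hvr⟩ := hv
    obtain ⟨hll, hlr⟩ := hle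
    have hsz : ((DTree.node i l r).size : ℝ) = (l.size : ℝ) + (r.size : ℝ) := by
      norm_num [DTree.size]
    cases d with
    | zero =>
      have e : (fun x : Fin n → Bool =>
          ((DTree.node i l r).eval x - ((DTree.node i l r).trunc 0).eval x)^2)
          = fun x => ((DTree.node i l r).eval x)^2 := by
        funext x
        have : ((DTree.node i l r).trunc 0).eval x = 0 := rfl
        rw [this]; ring
      rw [e]
      have e2 : (fun x : Fin n → Bool => ((DTree.node i l r).eval x)^2) = fun _ => (1:ℝ) := by
        funext x; exact eval_sq (DTree.node i l r) (show l.LeavesIn {-1,1} ∧ r.LeavesIn {-1,1} from ⟨hll, hlr⟩) x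
      rw [e2, expD_one]
      have hsz1 : (1:ℕ) ≤ (DTree.node i l r).size := size_pos _
      have : (1:ℝ) ≤ ((DTree.node i l r).size : ℝ) := by exact_mod_cast hsz1
      nlinarith
    | succ d =>
      have hRind : ∀ x b, r.eval (Function.update x i b) = r.eval x :=
        fun x b => eval_indep r _ hvr i (Finset.mem_insert_self i used) x b
      have hLind : ∀ x b, l.eval (Function.update x i b) = l.eval x :=
        fun x b => eval_indep l _ hvl i (Finset.mem_insert_self i used) x b
      have hRind' : ∀ x b, (r.trunc d).eval (Function.update x i b) = (r.trunc d).eval x :=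
        fun x b => eval_indep _ _ (validFrom_trunc r d _ hvr) i (Finset.mem_insert_self i used) x b
      have hLind' : ∀ x b, (l.trunc d).eval (Function.update x i b) = (l.trunc d).eval x :=
        fun x b => eval_indep _ _ (validFrom_trunc l d _ hvl) i (Finset.mem_insert_self i used) x b
      have e : (fun x : Fin n → Bool =>
          ((DTree.node i l r).eval x - ((DTree.node i l r).trunc (d+1)).eval x)^2)
          = fun x => (fun b : Bool => if b then (1:ℝ) else 0) (x i)
                * ((fun y => (r.eval y - (r.trunc d).eval y)^2) x)
              + (fun b : Bool => if b then (0:ℝ) else 1) (x i)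
                * ((fun y => (l.eval y - (l.trunc d).eval y)^2) x) := by
        funext x
        have e1 : (DTree.node i l r).eval x = if x i then r.eval x else l.eval x := rfl
        have e2 : ((DTree.node i l r).trunc (d+1)).eval x
            = if x i then (r.trunc d).eval x else (l.trunc d).eval x := rfl
        rw [e1, e2]
        cases x i <;> simp
      rw [e, expD_add,
        expD_split μ i (fun b : Bool => if b then (1:ℝ) else 0)
          (fun y => (r.eval y - (r.trunc d).eval y)^2)
          (fun x b => by
            show (r.eval (Function.update x i b) - (r.trunc d).eval (Function.update x i b))^2 = _
            rw [hRind, hRind']),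
        expD_split μ i (fun b : Bool => if b then (0:ℝ) else 1)
          (fun y => (l.eval y - (l.trunc d).eval y)^2)
          (fun x b => by
            show (l.eval (Function.update x i b) - (l.trunc d).eval (Function.update x i b))^2 = _
            rw [hLind, hLind'])]
      have hIR := ihr d _ hvr hlr
      have hIL := ihl d _ hvl hll
      have hER : 0 ≤ expD μ (fun y => (r.eval y - (r.trunc d).eval y)^2) :=
        expD_nonneg h1 fun x => sq_nonneg _
      have hEL : 0 ≤ expD μ (fun y => (l.eval y - (l.trunc d).eval y)^2) :=
        expD_nonneg h1 fun x => sq_nonneg _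
      have hμi := hμ i
      have ha1 : (0:ℝ) ≤ (1 + μ i)/2 := by have := hμi.1; linarith
      have ha1' : (1 + μ i)/2 ≤ 1 - c/2 := by have := hμi.2; linarith
      have ha2 : (0:ℝ) ≤ (1 - μ i)/2 := by have := hμi.2; linarith
      have ha2' : (1 - μ i)/2 ≤ 1 - c/2 := by have := hμi.1; linarith
      have hρd : (0:ℝ) ≤ (1 - c/2)^d := pow_nonneg hρ0 d
      have hR0 : (0:ℝ) ≤ (r.size : ℝ) := by positivity
      have hL0 : (0:ℝ) ≤ (l.size : ℝ) := by positivity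
      have c1 : ((1 + μ i) / 2 * (if (true : Bool) then (1:ℝ) else 0)
          + (1 - μ i) / 2 * (if (false : Bool) then (1:ℝ) else 0)) = (1 + μ i)/2 := by norm_num
      have c2 : ((1 + μ i) / 2 * (if (true : Bool) then (0:ℝ) else 1)
          + (1 - μ i) / 2 * (if (false : Bool) then (0:ℝ) else 1)) = (1 - μ i)/2 := by norm_num
      rw [c1, c2, hsz, pow_succ]
      have b1 : (1 + μ i)/2 * expD μ (fun y => (r.eval y - (r.trunc d).eval y)^2)
          ≤ (1 - c/2) * ((r.size : ℝ) * (1 - c/2)^d) :=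
        mul_le_mul ha1' hIR hER hρ0
      have b2 : (1 - μ i)/2 * expD μ (fun y => (l.eval y - (l.trunc d).eval y)^2)
          ≤ (1 - c/2) * ((l.size : ℝ) * (1 - c/2)^d) :=
        mul_le_mul ha2' hIL hEL hρ0
      nlinarith [b1, b2]

end TruncErr

theorem stmt12 (n s : ℕ) (c : ℝ) (hc : c ∈ Set.Ioc (0 : ℝ) (1 / 2))
    (μ : Fin n → ℝ) (hμ : ∀ i, μ i ∈ Set.Icc (-1 + c) (1 - c))
    (d : ℕ) (β : ℝ) (hβ : 0 < β)
    (T : DTree n) (hvalid : T.Valid) (hleaves : T.LeavesIn {-1, 1}) (hsize : T.size = s)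
    (f : (Fin n → Bool) → ℝ) (hf : ∀ x, f x = T.eval x) :
    1 - (4 * (1 - c / 2) ^ d * (s : ℝ) + 2 ^ (d + 2) * β) ≤
      ∑ S ∈ Finset.univ.filter
          (fun S : Finset (Fin n) => β ≤ |fourierC μ f S| ∧ S.card ≤ d),
        (fourierC μ f S) ^ 2 := by
  classical
  have hfe : f = T.eval := funext hf
  subst hfe
  subst hsize
  obtain ⟨hc0, hc2⟩ := hc
  have h1 : ∀ j, |μ j| < 1 := by
    intro j
    have h := hμ j
    rw [abs_lt]
    constructor <;> [linarith [h.1]; linarith [h.2]]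
  set ρ : ℝ := 1 - c / 2 with hρ
  have hρ0 : (0:ℝ) ≤ ρ := by rw [hρ]; linarith
  set g : (Fin n → Bool) → ℝ := (T.trunc d).eval with hg
  set F : Finset (Fin n) → ℝ := fun S => fourierC μ T.eval S with hF
  set G : Finset (Fin n) → ℝ := fun S => fourierC μ g S with hG
  set D : Finset (Fin n) → ℝ := fun S => fourierC μ (fun x => T.eval x - g x) S with hD
  have hDel : ∀ S, D S = F S - G S := fun S => fourierC_sub μ T.eval g S
  -- Parseval
  have hpars : (∑ S : Finset (Fin n), (F S) ^ 2) = 1 := by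
    rw [hF]
    rw [parseval μ h1 T.eval]
    rw [show (fun x => (T.eval x)^2) = fun _ => (1:ℝ) from funext fun x => eval_sq T hleaves x]
    exact expD_one μ
  -- truncation error
  have htrunc : (∑ S : Finset (Fin n), (D S) ^ 2) ≤ (T.size : ℝ) * ρ ^ d := by
    rw [hD]
    rw [parseval μ h1 (fun x => T.eval x - g x)]
    exact trunc_err μ hc0 hc2 hμ h1 T d ∅ hvalid hleaves
  -- L1 bound for g
  have hL1 : (∑ S : Finset (Fin n), |G S|) ≤ 2 ^ d := by
    rw [hG]
    calc (∑ S : Finset (Fin n), |fourierC μ g S|) ≤ 2 ^ (T.trunc d).depth :=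
          fourier_L1 μ h1 (T.trunc d) ∅ (validFrom_trunc T d ∅ hvalid)
            (leavesIn_trunc T hleaves d)
      _ ≤ 2 ^ d := pow_le_pow_right₀ (by norm_num) (depth_trunc T d)
  -- vanishing of G in high degrees
  have hvan : ∀ S : Finset (Fin n), d < S.card → G S = 0 := by
    intro S hS
    exact fourier_vanish μ h1 (T.trunc d) ∅ (validFrom_trunc T d ∅ hvalid) S
      (lt_of_le_of_lt (Nat.lt_succ_iff.mp (Nat.lt_succ_of_le (depth_trunc T d))) hS)
  -- partition of the sum
  have hsplit1 : (∑ S : Finset (Fin n), (F S) ^ 2)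
      = (∑ S ∈ Finset.univ.filter (fun S : Finset (Fin n) => S.card ≤ d), (F S) ^ 2)
        + ∑ S ∈ Finset.univ.filter (fun S : Finset (Fin n) => ¬ S.card ≤ d), (F S) ^ 2 :=
    (Finset.sum_filter_add_sum_filter_not Finset.univ _ _).symm
  have hsplit2 : (∑ S ∈ Finset.univ.filter (fun S : Finset (Fin n) => S.card ≤ d), (F S) ^ 2)
      = (∑ S ∈ (Finset.univ.filter (fun S : Finset (Fin n) => S.card ≤ d)).filter
            (fun S => β ≤ |F S|), (F S) ^ 2)
        + ∑ S ∈ (Finset.univ.filter (fun S : Finset (Fin n) => S.card ≤ d)).filter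
            (fun S => ¬ β ≤ |F S|), (F S) ^ 2 :=
    (Finset.sum_filter_add_sum_filter_not _ _ _).symm
  have hAeq : (Finset.univ.filter (fun S : Finset (Fin n) => S.card ≤ d)).filter
        (fun S => β ≤ |F S|)
      = Finset.univ.filter (fun S : Finset (Fin n) => β ≤ |fourierC μ T.eval S| ∧ S.card ≤ d) := by
    ext S
    simp only [Finset.mem_filter, Finset.mem_univ, true_and, hF]
    tauto
  -- high-degree part
  have hH : (∑ S ∈ Finset.univ.filter (fun S : Finset (Fin n) => ¬ S.card ≤ d), (F S) ^ 2)
      ≤ (T.size : ℝ) * ρ ^ d := by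
    have e : ∀ S ∈ Finset.univ.filter (fun S : Finset (Fin n) => ¬ S.card ≤ d),
        (F S) ^ 2 = (D S) ^ 2 := by
      intro S hS
      have hcard : d < S.card := by
        have := (Finset.mem_filter.1 hS).2; omega
      rw [hDel S, hvan S hcard]; ring
    rw [Finset.sum_congr rfl e]
    calc (∑ S ∈ Finset.univ.filter (fun S : Finset (Fin n) => ¬ S.card ≤ d), (D S) ^ 2)
        ≤ ∑ S : Finset (Fin n), (D S) ^ 2 :=
          Finset.sum_le_univ_sum_of_nonneg fun S => sq_nonneg _
      _ ≤ (T.size : ℝ) * ρ ^ d := htrunc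
  -- small-coefficient low-degree part
  set Bset := (Finset.univ.filter (fun S : Finset (Fin n) => S.card ≤ d)).filter
    (fun S => ¬ β ≤ |F S|) with hBset
  set X := ∑ S ∈ Bset, (F S) ^ 2 with hX
  have hX0 : 0 ≤ X := Finset.sum_nonneg fun S _ => sq_nonneg _
  have hXbound : X ≤ 2 ^ d * β + X / 2 + ((T.size : ℝ) * ρ ^ d) / 2 := by
    have step : ∀ S ∈ Bset, (F S) ^ 2 ≤ β * |G S| + ((F S) ^ 2 / 2 + (D S) ^ 2 / 2) := by
      intro S hS
      have hsmall : |F S| ≤ β := by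
        have := (Finset.mem_filter.1 hS).2
        push_neg at this
        linarith
      have e : (F S) ^ 2 = F S * G S + F S * D S := by rw [hDel S]; ring
      have t1 : F S * G S ≤ β * |G S| := by
        calc F S * G S ≤ |F S * G S| := le_abs_self _
          _ = |F S| * |G S| := abs_mul _ _
          _ ≤ β * |G S| := mul_le_mul_of_nonneg_right hsmall (abs_nonneg _)
      have t2 : F S * D S ≤ (F S) ^ 2 / 2 + (D S) ^ 2 / 2 := by
        nlinarith [sq_nonneg (F S - D S)]
      linarith [e.le, e.ge]
    calc X ≤ ∑ S ∈ Bset, (β * |G S| + ((F S) ^ 2 / 2 + (D S) ^ 2 / 2)) :=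
          Finset.sum_le_sum step
      _ = β * (∑ S ∈ Bset, |G S|) + ((∑ S ∈ Bset, (F S) ^ 2) / 2
            + (∑ S ∈ Bset, (D S) ^ 2) / 2) := by
          rw [Finset.sum_add_distrib, Finset.sum_add_distrib, Finset.mul_sum,
            Finset.sum_div, Finset.sum_div]
      _ ≤ β * (2 ^ d) + (X / 2 + ((T.size : ℝ) * ρ ^ d) / 2) := by
          have u1 : (∑ S ∈ Bset, |G S|) ≤ 2 ^ d :=
            le_trans (Finset.sum_le_univ_sum_of_nonneg fun S => abs_nonneg _) hL1
          have u2 : (∑ S ∈ Bset, (D S) ^ 2) ≤ (T.size : ℝ) * ρ ^ d :=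
            le_trans (Finset.sum_le_univ_sum_of_nonneg fun S => sq_nonneg _) htrunc
          have := mul_le_mul_of_nonneg_left u1 hβ.le
          rw [hX]
          linarith
      _ = 2 ^ d * β + X / 2 + ((T.size : ℝ) * ρ ^ d) / 2 := by ring
  have hXfinal : X ≤ 2 ^ (d+1) * β + (T.size : ℝ) * ρ ^ d := by
    have h2 : (2:ℝ) ^ (d+1) = 2 * 2 ^ d := by rw [pow_succ]; ring
    rw [h2]; linarith
  -- assemble
  have hq0 : (0:ℝ) ≤ (T.size : ℝ) * ρ ^ d := by positivity
  have h22 : (2:ℝ) ^ (d+2) = 2 * 2 ^ (d+1) := by rw [pow_succ]; ring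
  have h2d1 : (0:ℝ) ≤ 2 ^ (d+1) * β := by positivity
  have goalA : (∑ S ∈ Finset.univ.filter
      (fun S : Finset (Fin n) => β ≤ |fourierC μ T.eval S| ∧ S.card ≤ d), (F S) ^ 2)
      ≥ 1 - (2 * ((T.size : ℝ) * ρ ^ d) + 2 ^ (d+1) * β) := by
    rw [← hAeq]
    have := hpars
    rw [hsplit1, hsplit2] at this
    linarith
  calc 1 - (4 * ρ ^ d * (T.size : ℝ) + 2 ^ (d + 2) * β)
      ≤ 1 - (2 * ((T.size : ℝ) * ρ ^ d) + 2 ^ (d+1) * β) := by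
        rw [h22]; nlinarith
    _ ≤ ∑ S ∈ Finset.univ.filter
          (fun S : Finset (Fin n) => β ≤ |fourierC μ T.eval S| ∧ S.card ≤ d), (F S) ^ 2 := goalA
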